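/- arXiv:2209.04373 — 2 statements merged into one kernel-verified Lean document; each statement's English description precedes it below -/
import Mathlib

section
/- Let x, y ∈ ℕ^n with x majorized by y, and let p, q ∈ {1,...,n} with p ≥ q. Then x↓ + e_p is majorized by y↓ + e_q, where e_i is the i-th standard basis vector and addition is componentwise. -/
open Finset

/-- Nondecreasing rearrangement of a finite vector. -/
def sortAsc {n : ℕ} {α : Type*} [LinearOrder α] (x : Fin n → α) : Fin n → α :=
  x ∘ Tuple.sort x

/-- Nonincreasing rearrangement of a finite vector. -/
def sortDesc {n : ℕ} {α : Type*} [LinearOrder α] (x : Fin n → α) : Fin n → α :=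
  fun i => sortAsc x i.rev

/-- Sum of the entries of `f` at positions `< k`. -/
def psum {n : ℕ} {α : Type*} [AddCommMonoid α] (f : Fin n → α) (k : ℕ) : α :=
  ∑ i : Fin n, if (i : ℕ) < k then f i else 0

/-- `x` is majorized by `y`: every partial sum of the `k` largest entries of `x`
is at most that of `y`, and the total sums agree. -/
def Maj {n : ℕ} {α : Type*} [AddCommMonoid α] [LinearOrder α] [IsOrderedAddMonoid α] (x y : Fin n → α) : Prop :=
  (∀ k : ℕ, psum (sortDesc x) k ≤ psum (sortDesc y) k) ∧ (∑ i, x i) = ∑ i, y i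

/-- Weak submajorization: the sum of the `k` largest entries of `x` is at most
that of `y`, for every `k`. -/
def WeakSub {n : ℕ} {α : Type*} [AddCommMonoid α] [LinearOrder α] [IsOrderedAddMonoid α] (x y : Fin n → α) : Prop :=
  ∀ k : ℕ, psum (sortDesc x) k ≤ psum (sortDesc y) k

/-- Weak supermajorization: the sum of the `k` smallest entries of `x` is at least
that of `y`, for every `k`. -/
def WeakSuper {n : ℕ} {α : Type*} [AddCommMonoid α] [LinearOrder α] [IsOrderedAddMonoid α] (x y : Fin n → α) : Prop :=
  ∀ k : ℕ, psum (sortAsc y) k ≤ psum (sortAsc x) k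

/-!
Write `a = x↓` and `b = y↓`. Adding one to the nonincreasing vector `a` at `p` and re-sorting
amounts to adding one at the first index `ja` with `a ja = a p`; likewise for `b`, `q` and `jb`.
So the `k`-th partial sums grow by `[ja < k]` and `[jb < k]`, and the only danger is
`ja < k ≤ jb` with equal partial sums of `a` and `b` at `k`. Since `ja ≤ k ≤ jb ≤ q ≤ p`, the
vector `a` is constant there, and equality at `k` then forces `b` to be constant as well and
equality at `k + 1`. Pushed up to `jb`, this contradicts the strict drop of `b` before `jb`.
-/

section Rearrangement

variable {n : ℕ} {α : Type*} [LinearOrder α]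

lemma sortDesc_antitone (f : Fin n → α) : Antitone (sortDesc f) := fun _ _ hij =>
  Tuple.monotone_sort f (Fin.rev_le_rev.mpr hij)

lemma sortDesc_comp_perm (f : Fin n → α) (σ : Equiv.Perm (Fin n)) :
    sortDesc (f ∘ σ) = sortDesc f := by
  funext i
  exact congrFun Tuple.comp_perm_comp_sort_eq_comp_sort i.rev

lemma sortDesc_eq_self_of_antitone {f : Fin n → α} (hf : Antitone f) : sortDesc f = f := by
  have hasc : f ∘ Fin.revPerm = sortAsc f :=
    Tuple.comp_sort_eq_comp_iff_monotone.mpr fun _ _ hij => hf (Fin.rev_le_rev.mpr hij)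
  funext i
  simp [sortDesc, ← hasc]

lemma sum_sortDesc [AddCommMonoid α] (f : Fin n → α) : ∑ i, sortDesc f i = ∑ i, f i :=
  Equiv.sum_comp (Fin.revPerm.trans (Tuple.sort f)) f

lemma Antitone.exists_first_eq {a : Fin n → α} (ha : Antitone a) (p : Fin n) :
    ∃ j ≤ p, a j = a p ∧ ∀ i < j, a j < a i := by
  classical
  set s := univ.filter fun i => a i = a p
  have hs : s.Nonempty := ⟨p, by simp [s]⟩
  have hjp : s.min' hs ≤ p := s.min'_le p (by simp [s])
  have hj : a (s.min' hs) = a p := by simpa [s] using s.min'_mem hs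
  refine ⟨s.min' hs, hjp, hj, fun i hi => hj ▸ lt_of_le_of_ne (ha (hi.le.trans hjp)) ?_⟩
  exact fun hai => (s.min'_le i (by simp [s, hai])).not_gt hi

end Rearrangement

section Bump

variable {n : ℕ}

lemma antitone_add_single {a : Fin n → ℕ} (ha : Antitone a) {j : Fin n}
    (hj : ∀ i < j, a j < a i) : Antitone fun i => a i + if i = j then 1 else 0 := by
  intro i i' hii'
  dsimp only
  have := ha hii'
  rcases hii'.lt_or_eq with hlt | rfl
  · have := hj i
    split_ifs <;> grind
  · rfl

lemma sortDesc_add_single_eq {a : Fin n → ℕ} (ha : Antitone a) {j p : Fin n}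
    (hjp : a j = a p) (hj : ∀ i < j, a j < a i) :
    sortDesc (fun i => a i + if i = p then 1 else 0) = fun i => a i + if i = j then 1 else 0 := by
  have hswap : (fun i => a i + if i = p then 1 else 0) ∘ Equiv.swap j p =
      fun i => a i + if i = j then 1 else 0 := by
    funext i
    rcases eq_or_ne i j with rfl | hij
    · simp [hjp]
    rcases eq_or_ne i p with rfl | hip
    · simp [hjp, hij, hij.symm]
    · simp [Equiv.swap_apply_of_ne_of_ne hij hip, hij, hip]
  rw [← sortDesc_comp_perm _ (Equiv.swap j p), hswap,
    sortDesc_eq_self_of_antitone (antitone_add_single ha hj)]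

end Bump

section PartialSums

variable {n : ℕ}

lemma psum_succ {α : Type*} [AddCommMonoid α] (f : Fin n → α) (i : Fin n) :
    psum f (i + 1) = psum f i + f i := by
  rw [psum, psum, ← Fintype.sum_ite_eq' i f, ← sum_add_distrib]
  refine sum_congr rfl fun l _ => ?_
  rcases lt_trichotomy l i with h | rfl | h
  · simp [h.ne, h.not_ge, Nat.lt_succ_of_lt h]
  · simp
  · simp [h.ne', h.not_gt, (Nat.succ_le_of_lt h).not_gt]

lemma psum_add_ite_eq {α : Type*} [AddCommMonoid α] (f : Fin n → α) (j : Fin n) (c : α)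
    (k : ℕ) :
    psum (fun i => f i + if i = j then c else 0) k = psum f k + if (j : ℕ) < k then c else 0 := by
  rw [psum, psum, ← Fintype.sum_ite_eq' j fun _ => if (j : ℕ) < k then c else 0,
    ← sum_add_distrib]
  refine sum_congr rfl fun i _ => ?_
  rcases eq_or_ne i j with rfl | hij
  · split_ifs <;> simp
  · simp [hij]

variable {a b : Fin n → ℕ}

lemma apply_eq_and_psum_succ_eq (hab : ∀ k, psum a k ≤ psum b k) (hb : Antitone b)
    {i j : Fin n} (hij : (j : ℕ) = i + 1) (ha : a i = a j)
    (heq : psum a (i + 1) = psum b (i + 1)) :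
    b j = b i ∧ psum a (j + 1) = psum b (j + 1) := by
  have hbij : b j ≤ b i := hb (by omega)
  have hai := psum_succ a i
  have hbi := psum_succ b i
  have haj := psum_succ a j
  have hbj := psum_succ b j
  rw [hij] at haj hbj
  have := hab i
  have := hab (j + 1)
  rw [hij] at this ⊢
  omega

lemma psum_lt_psum_of_lt_of_le (ha : Antitone a) (hb : Antitone b)
    (hab : ∀ k, psum a k ≤ psum b k) {ja jb p : Fin n} (hjbp : jb ≤ p) (hja : a ja = a p)
    (hjb : ∀ i < jb, b jb < b i) {k : ℕ} (hjak : (ja : ℕ) < k) (hkjb : k ≤ jb) :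
    psum a k < psum b k := by
  have touch : ∀ k, (ja : ℕ) < k → k ≤ jb → psum a k = psum b k →
      k < jb ∧ psum a (k + 1) = psum b (k + 1) := by
    intro k hjak hkjb heq
    set i : Fin n := ⟨k - 1, by omega⟩
    set j : Fin n := ⟨k, by omega⟩
    have hflat : a i = a j := by
      have := ha (show ja ≤ i by simp [Fin.le_def, i]; omega)
      have := ha (show i ≤ j by simp [Fin.le_def, i, j])
      have := ha (show j ≤ p from (Fin.le_def.mpr (by simpa [j] using hkjb)).trans hjbp)
      omega
    obtain ⟨hbij, heq'⟩ := apply_eq_and_psum_succ_eq hab hb (by simp [i, j]; omega) hflat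
      (by simpa [i, show k - 1 + 1 = k by omega] using heq)
    refine ⟨hkjb.lt_of_ne fun hk => ?_, heq'⟩
    have hjjb : j = jb := Fin.ext hk
    exact (hjb i (by simp [Fin.lt_def, i]; omega)).ne' (hjjb ▸ hbij.symm)
  induction hkjb using Nat.decreasingInduction with
  | self => exact (hab jb).lt_of_ne fun heq => (touch jb hjak le_rfl heq).1.false
  | of_succ m hm ih =>
    exact (hab m).lt_of_ne fun heq => (ih (by omega)).ne (touch m hjak hm.le heq).2

end PartialSums

theorem stmt_7 {n : ℕ} (x y : Fin n → ℕ) (h : Maj x y) (p q : Fin n) (hqp : q ≤ p) :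
    Maj (fun i => sortDesc x i + if i = p then 1 else 0)
        (fun i => sortDesc y i + if i = q then 1 else 0) := by
  obtain ⟨hsub, hsum⟩ := h
  have hx := sortDesc_antitone x
  have hy := sortDesc_antitone y
  obtain ⟨ja, -, hja, hja_first⟩ := hx.exists_first_eq p
  obtain ⟨jb, hjbq, hjb, hjb_first⟩ := hy.exists_first_eq q
  refine ⟨fun k => ?_, ?_⟩
  · rw [sortDesc_add_single_eq hx hja hja_first, sortDesc_add_single_eq hy hjb hjb_first,
      psum_add_ite_eq, psum_add_ite_eq]
    have hlt (hjak : (ja : ℕ) < k) (hkjb : k ≤ jb) :=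
      psum_lt_psum_of_lt_of_le hx hy hsub (hjbq.trans hqp) hja hjb_first hjak hkjb
    have := hsub k
    split_ifs <;> omega
  · simp only [sum_add_distrib, sum_sortDesc, hsum, Fintype.sum_ite_eq']
end

section
/- Let r ∈ ℕ^m and c ∈ ℕ^n. The weak supermajorization c ≺^w r* holds if and only if the weak submajorization r ≺_w c* holds, where v* denotes the partition conjugate of v. -/
open Finset

/-- Partition conjugate of `r ∈ ℕ^m`, taken with dimension `n`:
its `j`-th entry (1-indexed `j+1`) counts the indices `i` with `r i ≥ j+1`. -/
def conj {m : ℕ} (r : Fin m → ℕ) (n : ℕ) : Fin n → ℕ :=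
  fun j => (Finset.univ.filter fun i => (j : ℕ) + 1 ≤ r i).card

/-!
Both majorizations unfold to one condition, symmetric in `r` and `c`: for all `S ⊆ [m]` and
`T ⊆ [n]`, `∑_{i ∈ S} r i + ∑_{j ∈ T} c j ≤ ∑_j c j + |S| |T|`. The sum of the `k` largest
entries of a vector is the largest sum over at most `k` of its entries, the same partial sum of
a conjugate `c*` is `∑_j min (c j) k` (here `c j ≤ m` is needed), and `∑_j min (c j) k` is the
least value of `∑_j c j - ∑_{j ∈ T} c j + |T| k`. For the supermajorization one first passes to
complements: the sum of the `k` smallest entries is the total minus the sum of the `n - k`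
largest.
-/

namespace Finset

variable {ι α : Type*} [AddCommMonoid α] [LinearOrder α] [IsOrderedAddMonoid α]

theorem sum_le_sum_of_card_eq [DecidableEq ι] {s t : Finset ι} {f : ι → α} (hst : #s = #t)
    (hf : ∀ i ∈ s \ t, ∀ j ∈ t \ s, f i ≤ f j) : ∑ i ∈ s, f i ≤ ∑ i ∈ t, f i := by
  obtain hempty | ⟨i₀, hi₀, hmax⟩ := (s \ t).eq_empty_or_nonempty.imp id (exists_max_image _ f)
  · rw [eq_of_subset_of_card_le (sdiff_eq_empty_iff_subset.mp hempty) hst.ge]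
  calc ∑ i ∈ s, f i = ∑ i ∈ s ∩ t, f i + ∑ i ∈ s \ t, f i := (sum_inter_add_sum_sdiff _ _ _).symm
    _ ≤ ∑ i ∈ s ∩ t, f i + #(s \ t) • f i₀ := by grw [sum_le_card_nsmul _ _ _ hmax]
    _ = ∑ i ∈ t ∩ s, f i + #(t \ s) • f i₀ := by rw [inter_comm, card_sdiff_comm hst]
    _ ≤ ∑ i ∈ t ∩ s, f i + ∑ i ∈ t \ s, f i := by
        grw [card_nsmul_le_sum _ _ _ fun j hj => hf i₀ hi₀ j hj]
    _ = ∑ i ∈ t, f i := sum_inter_add_sum_sdiff _ _ _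

end Finset

section Rearrangement

variable {α : Type*} {N : ℕ}

lemma psum_eq_sum_filter [AddCommMonoid α] (f : Fin N → α) (k : ℕ) :
    psum f k = ∑ i : Fin N with i.val < k, f i :=
  (sum_filter _ _).symm

lemma psum_of_le [AddCommMonoid α] (f : Fin N → α) {k : ℕ} (hk : N ≤ k) :
    psum f k = ∑ i, f i :=
  sum_congr rfl fun i _ => if_pos (i.isLt.trans_le hk)

@[simp]
lemma psum_zero [AddCommMonoid α] (f : Fin N → α) : psum f 0 = 0 := by
  simp [psum]

lemma psum_mono [AddCommMonoid α] [PartialOrder α] [CanonicallyOrderedAdd α]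
    (f : Fin N → α) : Monotone (psum f) := fun k k' hk =>
  sum_le_sum fun i _ => by
    split_ifs with h h'
    exacts [le_rfl, absurd (h.trans_le hk) h', zero_le, le_rfl]

variable [LinearOrder α]

lemma sortDesc_eq_comp (x : Fin N → α) :
    sortDesc x = x ∘ (Fin.revPerm.trans (Tuple.sort x)) := rfl

lemma antitone_sortDesc (x : Fin N → α) : Antitone (sortDesc x) :=
  fun _ _ hij => Tuple.monotone_sort x (Fin.rev_le_rev.mpr hij)

lemma sortDesc_eq_self_of_antitone_s11 {x : Fin N → α} (hx : Antitone x) : sortDesc x = x := by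
  have hasc : x ∘ Fin.revPerm = sortAsc x :=
    Tuple.unique_monotone (fun _ _ hij => hx (Fin.rev_le_rev.mpr hij)) (Tuple.monotone_sort x)
  funext i
  simp [sortDesc, ← hasc]

variable [AddCommMonoid α]

lemma sum_sortAsc (x : Fin N → α) : ∑ i, sortAsc x i = ∑ i, x i :=
  Equiv.sum_comp (Tuple.sort x) x

lemma psum_sortAsc_add_psum_sortDesc (x : Fin N → α) {k : ℕ} (hk : k ≤ N) :
    psum (sortAsc x) k + psum (sortDesc x) (N - k) = ∑ i, x i := by
  have hrev : psum (sortDesc x) (N - k) = ∑ i : Fin N, if k ≤ (i : ℕ) then sortAsc x i else 0 := by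
    rw [psum, ← Equiv.sum_comp Fin.revPerm]
    refine sum_congr rfl fun i _ => ?_
    simp only [Fin.revPerm_apply, sortDesc, Fin.rev_rev, Fin.val_rev]
    congr 1
    have := i.isLt
    apply propext
    omega
  rw [psum, hrev, ← sum_add_distrib, ← sum_sortAsc x]
  refine sum_congr rfl fun i _ => ?_
  split_ifs <;> first | omega | simp

lemma exists_psum_sortDesc_eq_sum (x : Fin N → α) (k : ℕ) :
    ∃ S : Finset (Fin N), #S ≤ k ∧ psum (sortDesc x) k = ∑ i ∈ S, x i := by
  set σ := Fin.revPerm.trans (Tuple.sort x)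
  refine ⟨({i : Fin N | i.val < k} : Finset (Fin N)).map σ.toEmbedding, ?_, ?_⟩
  · simp [Fin.card_filter_val_lt]
  · simp [sum_map, psum_eq_sum_filter, sortDesc_eq_comp, σ]

lemma weakSuper_iff [IsOrderedCancelAddMonoid α] (x y : Fin N → α) :
    WeakSuper x y ↔
      ∀ l ≤ N, ∑ i, y i + psum (sortDesc x) l ≤ ∑ i, x i + psum (sortDesc y) l := by
  have hcompl : ∀ k ≤ N, (psum (sortAsc y) k ≤ psum (sortAsc x) k ↔
      ∑ i, y i + psum (sortDesc x) (N - k) ≤ ∑ i, x i + psum (sortDesc y) (N - k)) := by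
    intro k hk
    rw [← psum_sortAsc_add_psum_sortDesc x hk, ← psum_sortAsc_add_psum_sortDesc y hk,
      add_right_comm, add_assoc, add_assoc, add_le_add_iff_right]
  refine ⟨fun h l hl => ?_, fun h k => ?_⟩
  · simpa [Nat.sub_sub_self hl] using (hcompl (N - l) (Nat.sub_le N l)).mp (h (N - l))
  · by_cases hk : k ≤ N
    · exact (hcompl k hk).mpr (h (N - k) (Nat.sub_le N k))
    · rw [psum_of_le _ (le_of_not_ge hk), psum_of_le _ (le_of_not_ge hk), sum_sortAsc,
        sum_sortAsc]
      simpa using h 0 (Nat.zero_le N)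

variable [IsOrderedAddMonoid α]

lemma sum_le_psum_sortDesc (x : Fin N → α) (S : Finset (Fin N)) :
    ∑ i ∈ S, x i ≤ psum (sortDesc x) #S := by
  set σ := Fin.revPerm.trans (Tuple.sort x)
  have hS : #S ≤ N := by simpa using card_le_univ S
  calc ∑ i ∈ S, x i = ∑ i ∈ S.map σ.symm.toEmbedding, sortDesc x i := by
        simp [sum_map, sortDesc_eq_comp, σ]
    _ ≤ ∑ i : Fin N with i.val < #S, sortDesc x i := by
        refine sum_le_sum_of_card_eq (by simp [Fin.card_filter_val_lt, hS]) fun i hi j hj => ?_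
        simp only [mem_sdiff, mem_filter, mem_univ, true_and] at hi hj
        exact antitone_sortDesc x (Fin.le_def.mpr (by omega))
    _ = psum (sortDesc x) #S := (psum_eq_sum_filter _ _).symm

lemma psum_sortDesc_add_le_iff [CanonicallyOrderedAdd α] (x : Fin N → α) (k : ℕ) (a b : α) :
    psum (sortDesc x) k + a ≤ b ↔ ∀ S : Finset (Fin N), #S ≤ k → ∑ i ∈ S, x i + a ≤ b := by
  refine ⟨fun h S hS => ?_, fun h => ?_⟩
  · grw [sum_le_psum_sortDesc x S, psum_mono _ hS, h]
  · obtain ⟨S, hS, hsum⟩ := exists_psum_sortDesc_eq_sum x k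
    exact hsum ▸ h S hS

end Rearrangement

lemma add_sum_le_add_sum_min_iff {ι : Type*} [Fintype ι] [DecidableEq ι] (x : ι → ℕ) (l a b : ℕ) :
    a + ∑ i, x i ≤ b + ∑ i, min (x i) l ↔ ∀ S : Finset ι, a + ∑ i ∈ S, x i ≤ b + #S * l := by
  have hle : ∀ S : Finset ι, ∑ i ∈ S, x i + ∑ i, min (x i) l ≤ ∑ i, x i + #S * l := by
    intro S
    have h₁ : ∑ i ∈ S, min (x i) l ≤ #S * l := by
      simpa using sum_le_card_nsmul S _ l fun i _ => min_le_right (x i) l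
    have h₂ : ∑ i ∈ Sᶜ, min (x i) l ≤ ∑ i ∈ Sᶜ, x i := sum_le_sum fun i _ => min_le_left _ _
    have := sum_add_sum_compl S x
    have := sum_add_sum_compl S fun i => min (x i) l
    omega
  -- `S₀` attains the maximum of `∑ i ∈ S, x i - #S * l`, which is `∑ i, (x i - l)`.
  set S₀ : Finset ι := {i | l ≤ x i}
  have heq : ∑ i ∈ S₀, x i + ∑ i, min (x i) l = ∑ i, x i + #S₀ * l := by
    have h₁ : ∑ i ∈ S₀, min (x i) l = #S₀ * l := by
      rw [sum_congr rfl fun i hi => min_eq_right (mem_filter.mp hi).2, sum_const, smul_eq_mul]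
    have h₂ : ∑ i ∈ S₀ᶜ, min (x i) l = ∑ i ∈ S₀ᶜ, x i :=
      sum_congr rfl fun i hi => min_eq_left (by simpa [S₀] using hi : x i < l).le
    have := sum_add_sum_compl S₀ x
    have := sum_add_sum_compl S₀ fun i => min (x i) l
    omega
  refine ⟨fun h S => ?_, fun h => ?_⟩
  · have := hle S
    omega
  · have := h S₀
    omega

section Conjugate

variable {m : ℕ}

lemma antitone_conj (x : Fin m → ℕ) (K : ℕ) : Antitone (conj x K) := fun j j' hjj' =>
  card_le_card <| monotone_filter_right _ fun i hi => by
    have : (j : ℕ) ≤ j' := hjj'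
    omega

lemma psum_conj {K : ℕ} (x : Fin m → ℕ) (hx : ∀ i, x i ≤ K) (k : ℕ) :
    psum (conj x K) k = ∑ i, min (x i) k := by
  calc psum (conj x K) k
      = ∑ j : Fin K, ∑ i, if (j : ℕ) < min k (x i) then 1 else 0 := by
        refine sum_congr rfl fun j _ => ?_
        by_cases hj : (j : ℕ) < k
        · simp only [hj, if_true, conj, card_filter]
          exact sum_congr rfl fun i _ => if_congr (by omega) rfl rfl
        · simp only [hj, if_false]
          exact (sum_eq_zero fun i _ => if_neg (by omega)).symm
    _ = ∑ i, #{j : Fin K | (j : ℕ) < min k (x i)} := by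
        rw [sum_comm]
        simp only [card_filter]
    _ = ∑ i, min (x i) k := sum_congr rfl fun i _ => by
        rw [Fin.card_filter_val_lt]
        have := hx i
        omega

lemma sum_conj {K : ℕ} (x : Fin m → ℕ) (hx : ∀ i, x i ≤ K) : ∑ j, conj x K j = ∑ i, x i := by
  rw [← psum_of_le _ le_rfl, psum_conj x hx]
  exact sum_congr rfl fun i _ => min_eq_left (hx i)

end Conjugate

def CutCondition {m n : ℕ} (r : Fin m → ℕ) (c : Fin n → ℕ) : Prop :=
  ∀ (S : Finset (Fin m)) (T : Finset (Fin n)), ∑ i ∈ S, r i + ∑ j ∈ T, c j ≤ ∑ j, c j + #S * #T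

section Duality

variable {m n : ℕ} (r : Fin m → ℕ) (c : Fin n → ℕ)

lemma weakSub_conj_iff_cutCondition (hc : ∀ j, c j ≤ m) :
    WeakSub r (conj c m) ↔ CutCondition r c := by
  have step : ∀ k, psum (sortDesc r) k ≤ psum (sortDesc (conj c m)) k ↔
      ∀ (T : Finset (Fin n)) (S : Finset (Fin m)), #S ≤ k →
        ∑ i ∈ S, r i + ∑ j ∈ T, c j ≤ ∑ j, c j + #T * k := fun k => by
    rw [sortDesc_eq_self_of_antitone_s11 (antitone_conj c m), psum_conj c hc,
      ← add_le_add_iff_right (∑ j, c j), add_comm (∑ j, min (c j) k),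
      add_sum_le_add_sum_min_iff]
    exact forall_congr' fun T => psum_sortDesc_add_le_iff r k _ _
  simp only [WeakSub, step]
  refine ⟨fun h S T => ?_, fun h k T S hS => ?_⟩
  · simpa [mul_comm] using h #S T S le_rfl
  · calc _ ≤ ∑ j, c j + #S * #T := h S T
      _ ≤ ∑ j, c j + #T * k := by rw [mul_comm]; gcongr

lemma weakSuper_conj_iff_cutCondition (hr : ∀ i, r i ≤ n) :
    WeakSuper c (conj r n) ↔ CutCondition r c := by
  have step : ∀ l, ∑ j, conj r n j + psum (sortDesc c) l ≤ ∑ j, c j + psum (sortDesc (conj r n)) l ↔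
      ∀ (S : Finset (Fin m)) (T : Finset (Fin n)), #T ≤ l →
        ∑ j ∈ T, c j + ∑ i ∈ S, r i ≤ ∑ j, c j + #S * l := fun l => by
    rw [sortDesc_eq_self_of_antitone_s11 (antitone_conj r n), psum_conj r hr, sum_conj r hr,
      add_comm (∑ i, r i), add_sum_le_add_sum_min_iff]
    exact forall_congr' fun S => psum_sortDesc_add_le_iff c l _ _
  simp only [weakSuper_iff, step]
  refine ⟨fun h S T => ?_, fun h l _ S T hT => ?_⟩
  · simpa [add_comm] using h #T (by simpa using card_le_univ T) S T le_rfl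
  · calc _ = ∑ i ∈ S, r i + ∑ j ∈ T, c j := add_comm _ _
      _ ≤ ∑ j, c j + #S * #T := h S T
      _ ≤ ∑ j, c j + #S * l := by gcongr

end Duality

theorem stmt_11 {m n : ℕ} (r : Fin m → ℕ) (c : Fin n → ℕ)
    (hr : ∀ i, r i ≤ n) (hc : ∀ j, c j ≤ m) :
    WeakSuper c (conj r n) ↔ WeakSub r (conj c m) :=
  (weakSuper_conj_iff_cutCondition r c hr).trans (weakSub_conj_iff_cutCondition r c hc).symm
end
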